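/- arXiv:2312.14975 — 2 statements merged into one kernel-verified Lean document; each statement's English description precedes it below -/
import Mathlib

section
/- Let d ≥ 1, σ > 0, and let u : ℝ^d → ℝ be bounded and measurable. Then the Hessian of the Gaussian smoothing f of u admits the variance-reduced symmetric representation Hf(x) = ∫_{ℝ^d} ((z zᵀ − σ² I_d)/(2σ⁴)) (u(x+z) + u(x−z) − 2u(x)) ρ_σ(z) dz for every x ∈ ℝ^d. -/
/-!
Writing `f y = ∫ u a ρ(y - a) da` puts every derivative on the Gaussian `ρ`. The density and its
first two derivatives are bounded by Gaussians, and a Gaussian bound at `y - a` gives one at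
`x - a` (with half the rate) uniformly for `‖y - x‖ ≤ 1`; so dominated convergence differentiates
twice under the integral, and `∂ᵢ∂ⱼ f (x) = ∫ u(x + z) K(z) dz` with
`K(z) = ∂ᵢ∂ⱼ ρ(z) = (zᵢ zⱼ - σ² δᵢⱼ) / σ⁴ · ρ(z)`. Since `K` is even, the same integral equals
`∫ u(x - z) K(z) dz`, and since `∫ K = 0` the term `u x ∫ K` may be subtracted; averaging the two
gives the symmetric formula.
-/

open MeasureTheory Real

noncomputable def gaussDensity (d : ℕ) (σ : ℝ) (z : EuclideanSpace ℝ (Fin d)) : ℝ :=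
  (2 * Real.pi * σ ^ 2) ^ (-(d : ℝ) / 2) * Real.exp (-‖z‖ ^ 2 / (2 * σ ^ 2))

noncomputable def gaussSmooth (d : ℕ) (σ : ℝ) (u : EuclideanSpace ℝ (Fin d) → ℝ)
    (x : EuclideanSpace ℝ (Fin d)) : ℝ :=
  ∫ z, u (x + z) * gaussDensity d σ z

open Metric

section GaussianDecay

variable {E F G : Type*} [NormedAddCommGroup E] [NormedAddCommGroup F] [NormedAddCommGroup G]

def HasGaussianDecay (g : E → F) : Prop :=
  ∃ C c : ℝ, 0 < c ∧ ∀ w, ‖g w‖ ≤ C * exp (-c * ‖w‖ ^ 2)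

lemma exists_pow_le_mul_exp_mul_sq (k : ℕ) {c : ℝ} (hc : 0 < c) :
    ∃ C, 0 ≤ C ∧ ∀ s : ℝ, 0 ≤ s → s ^ k ≤ C * exp (c * s ^ 2) := by
  refine ⟨1 + k.factorial / c ^ k, by positivity, fun s hs => ?_⟩
  have h_one_le : 1 ≤ exp (c * s ^ 2) := one_le_exp (by positivity)
  have h_sq_pow : (s ^ 2) ^ k ≤ k.factorial / c ^ k * exp (c * s ^ 2) := by
    have := pow_div_factorial_le_exp (c * s ^ 2) (by positivity) k
    rw [mul_pow, div_le_iff₀ (by positivity)] at this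
    rw [div_mul_eq_mul_div, le_div_iff₀ (by positivity)]
    linarith
  have h_pow_le : s ^ k ≤ 1 + (s ^ 2) ^ k := by
    rcases le_total s 1 with hs1 | hs1
    · linarith [pow_le_one₀ hs hs1 (n := k), pow_nonneg (sq_nonneg s) k]
    · rw [← pow_mul]
      linarith [pow_le_pow_right₀ hs1 (by omega : k ≤ 2 * k)]
  nlinarith

lemma HasGaussianDecay.add {g h : E → F} (hg : HasGaussianDecay g) (hh : HasGaussianDecay h) :
    HasGaussianDecay (g + h) := by
  obtain ⟨C₁, c₁, hc₁, hg⟩ := hg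
  obtain ⟨C₂, c₂, hc₂, hh⟩ := hh
  refine ⟨C₁ + C₂, min c₁ c₂, lt_min hc₁ hc₂, fun w => ?_⟩
  have hC₁ : 0 ≤ C₁ := nonneg_of_mul_nonneg_left ((norm_nonneg _).trans (hg 0)) (exp_pos _)
  have hC₂ : 0 ≤ C₂ := nonneg_of_mul_nonneg_left ((norm_nonneg _).trans (hh 0)) (exp_pos _)
  have hexp {c : ℝ} (hc : min c₁ c₂ ≤ c) : exp (-c * ‖w‖ ^ 2) ≤ exp (-min c₁ c₂ * ‖w‖ ^ 2) := by
    gcongr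
  calc ‖(g + h) w‖ ≤ C₁ * exp (-c₁ * ‖w‖ ^ 2) + C₂ * exp (-c₂ * ‖w‖ ^ 2) :=
        (norm_add_le _ _).trans (add_le_add (hg w) (hh w))
    _ ≤ (C₁ + C₂) * exp (-min c₁ c₂ * ‖w‖ ^ 2) := by
        grw [hexp (min_le_left c₁ c₂), hexp (min_le_right c₁ c₂), add_mul]

lemma HasGaussianDecay.of_norm_le_pow_mul {g : E → F} {h : E → G} (hh : HasGaussianDecay h)
    (A : ℝ) (k : ℕ) (hgh : ∀ w, ‖g w‖ ≤ A * ‖w‖ ^ k * ‖h w‖) : HasGaussianDecay g := by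
  obtain ⟨C, c, hc, hh⟩ := hh
  obtain ⟨B, hB, hpow⟩ := exists_pow_le_mul_exp_mul_sq k (half_pos hc)
  refine ⟨|A| * B * C, c / 2, half_pos hc, fun w => ?_⟩
  calc ‖g w‖ ≤ |A| * ‖w‖ ^ k * ‖h w‖ := by
        grw [hgh w, le_abs_self A]
    _ ≤ |A| * (B * exp (c / 2 * ‖w‖ ^ 2)) * (C * exp (-c * ‖w‖ ^ 2)) := by
        gcongr
        exacts [hpow _ (norm_nonneg w), hh w]
    _ = |A| * B * C * (exp (c / 2 * ‖w‖ ^ 2) * exp (-c * ‖w‖ ^ 2)) := by ring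
    _ = |A| * B * C * exp (-(c / 2) * ‖w‖ ^ 2) := by rw [← exp_add]; ring_nf

lemma exp_neg_mul_sq_norm_add_le {c : ℝ} (hc : 0 ≤ c) (w : E) {v : E} (hv : ‖v‖ ≤ 1) :
    exp (-c * ‖w + v‖ ^ 2) ≤ exp c * exp (-(c / 2) * ‖w‖ ^ 2) := by
  rw [← exp_add, exp_le_exp]
  have h_tri : ‖w‖ ≤ ‖w + v‖ + 1 := by
    have := norm_sub_le (w + v) v
    rw [add_sub_cancel_right] at this
    linarith
  have h_sq : ‖w‖ ^ 2 ≤ 2 * ‖w + v‖ ^ 2 + 2 := by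
    nlinarith [norm_nonneg w, sq_nonneg (‖w + v‖ - 1)]
  nlinarith

end GaussianDecay

section Integration

variable {E F : Type*} [NormedAddCommGroup E] [InnerProductSpace ℝ E] [FiniteDimensional ℝ E]
  [MeasurableSpace E] [BorelSpace E] [NormedAddCommGroup F]

lemma integrable_exp_neg_mul_sq_norm {c : ℝ} (hc : 0 < c) :
    Integrable (fun w : E => exp (-c * ‖w‖ ^ 2)) := by
  have := (GaussianFourier.integrable_cexp_neg_mul_sq_norm_add (V := E) (b := c)
    (by simpa using hc) 0 0).norm
  simpa [Complex.norm_exp, ← Complex.ofReal_pow] using this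

lemma HasGaussianDecay.exists_integrable_bound_comp_sub {g : E → F} (hg : HasGaussianDecay g)
    (x : E) :
    ∃ bound : E → ℝ, Integrable bound ∧ ∀ a, ∀ y ∈ closedBall x 1, ‖g (y - a)‖ ≤ bound a := by
  obtain ⟨C, c, hc, hg⟩ := hg
  refine ⟨fun a => C * exp c * exp (-(c / 2) * ‖x - a‖ ^ 2),
    ((integrable_exp_neg_mul_sq_norm (half_pos hc)).comp_sub_left x).const_mul _, fun a y hy => ?_⟩
  have hC : 0 ≤ C := nonneg_of_mul_nonneg_left ((norm_nonneg _).trans (hg 0)) (exp_pos _)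
  have hy' : ‖y - x‖ ≤ 1 := by simpa [dist_eq_norm] using hy
  calc ‖g (y - a)‖ ≤ C * exp (-c * ‖(x - a) + (y - x)‖ ^ 2) := by
        simpa using hg (y - a)
    _ ≤ C * (exp c * exp (-(c / 2) * ‖x - a‖ ^ 2)) := by
        gcongr; exact exp_neg_mul_sq_norm_add_le hc.le _ hy'
    _ = _ := by ring

lemma HasGaussianDecay.integrable {g : E → F} (hg : HasGaussianDecay g)
    (hg_meas : AEStronglyMeasurable g) : Integrable g := by
  obtain ⟨C, c, hc, hg⟩ := hg
  exact ((integrable_exp_neg_mul_sq_norm hc).const_mul C).mono' hg_meas (.of_forall hg)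

variable [NormedSpace ℝ F] {u : E → ℝ} {M : ℝ}

lemma HasGaussianDecay.integrable_smul_comp_sub {g : E → F} (hg : HasGaussianDecay g)
    (hg_cont : Continuous g) (hu : AEStronglyMeasurable u) (hM : ∀ a, ‖u a‖ ≤ M) (x : E) :
    Integrable (fun a => u a • g (x - a)) :=
  ((hg.integrable hg_cont.aestronglyMeasurable).comp_sub_left x).bdd_smul M hu (.of_forall hM)

lemma hasFDerivAt_integral_smul_comp_sub {g : E → F} {g' : E → E →L[ℝ] F}
    (hg : ∀ w, HasFDerivAt g (g' w) w) (hg'_cont : Continuous g')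
    (hg_decay : HasGaussianDecay g) (hg'_decay : HasGaussianDecay g')
    (hu : AEStronglyMeasurable u) (hM : ∀ a, ‖u a‖ ≤ M) (x : E) :
    HasFDerivAt (fun y => ∫ a, u a • g (y - a)) (∫ a, u a • g' (x - a)) x := by
  have hg_cont : Continuous g := continuous_iff_continuousAt.2 fun w => (hg w).continuousAt
  obtain ⟨bound, hbound_int, hbound⟩ := hg'_decay.exists_integrable_bound_comp_sub x
  refine hasFDerivAt_integral_of_dominated_of_fderiv_le (F := fun y a => u a • g (y - a))
    (F' := fun y a => u a • g' (y - a)) (bound := fun a => M * bound a)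
    (closedBall_mem_nhds x one_pos)
    (.of_forall fun y =>
      hu.smul (hg_cont.comp (continuous_const.sub continuous_id)).aestronglyMeasurable)
    (hg_decay.integrable_smul_comp_sub hg_cont hu hM x)
    (hu.smul (hg'_cont.comp (continuous_const.sub continuous_id)).aestronglyMeasurable)
    (.of_forall fun a y hy => ?_) (hbound_int.const_mul M) (.of_forall fun a y _ => ?_)
  · rw [norm_smul]
    exact mul_le_mul (hM a) (hbound a y hy) (norm_nonneg _) ((norm_nonneg _).trans (hM a))
  · exact ((hg (y - a)).comp y ((hasFDerivAt_id y).sub_const a)).const_smul (u a)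

lemma fderiv_integral_smul_comp_sub_apply {g : E → F} {g' : E → E →L[ℝ] F}
    (hg : ∀ w, HasFDerivAt g (g' w) w) (hg'_cont : Continuous g')
    (hg_decay : HasGaussianDecay g) (hg'_decay : HasGaussianDecay g')
    (hu : AEStronglyMeasurable u) (hM : ∀ a, ‖u a‖ ≤ M) (x v : E) :
    fderiv ℝ (fun y => ∫ a, u a • g (y - a)) x v = ∫ a, u a • g' (x - a) v := by
  rw [(hasFDerivAt_integral_smul_comp_sub hg hg'_cont hg_decay hg'_decay hu hM x).fderiv,
    ContinuousLinearMap.integral_apply (hg'_decay.integrable_smul_comp_sub hg'_cont hu hM x)]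
  rfl

lemma integral_mul_comp_sub_of_even_of_integral_eq_zero {K : E → ℝ} (hK : Integrable K)
    (hK_even : ∀ z, K (-z) = K z) (hK_zero : ∫ z, K z = 0) (hu : AEStronglyMeasurable u)
    (hM : ∀ a, ‖u a‖ ≤ M) (x : E) :
    ∫ a, u a * K (x - a) = ∫ z, (u (x + z) + u (x - z) - 2 * u x) / 2 * K z := by
  have hint : Integrable fun a => u a * K (x - a) :=
    (hK.comp_sub_left x).bdd_mul hu (.of_forall hM)
  have h_plus : ∫ a, u a * K (x - a) = ∫ z, u (x + z) * K z := by
    rw [← integral_add_left_eq_self _ x]; simp [hK_even]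
  have h_minus : ∫ a, u a * K (x - a) = ∫ z, u (x - z) * K z := by
    rw [← integral_sub_left_eq_self _ _ x]; simp
  have hint_plus : Integrable fun z => u (x + z) * K z := by
    simpa [hK_even] using hint.comp_add_left x
  have hint_minus : Integrable fun z => u (x - z) * K z := by
    simpa using hint.comp_sub_left x
  have h_split : (fun z => (u (x + z) + u (x - z) - 2 * u x) / 2 * K z) =
      fun z => (u (x + z) * K z + u (x - z) * K z) / 2 - u x * K z := by
    funext z; ring
  have hint_avg : Integrable fun z => (u (x + z) * K z + u (x - z) * K z) / 2 :=
    (hint_plus.add hint_minus).div_const 2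
  rw [h_split, integral_sub hint_avg (hK.const_mul (u x)),
    integral_div, integral_add hint_plus hint_minus, integral_const_mul, hK_zero,
    ← h_plus, ← h_minus]
  ring

end Integration

section Gaussian

variable {d : ℕ} {σ : ℝ}

noncomputable def gaussDensityDeriv (d : ℕ) (σ : ℝ) (w : EuclideanSpace ℝ (Fin d)) :
    EuclideanSpace ℝ (Fin d) →L[ℝ] ℝ :=
  (-(σ ^ 2)⁻¹ * gaussDensity d σ w) • innerSL ℝ w

noncomputable def gaussDensityPartial (d : ℕ) (σ : ℝ) (j : Fin d)
    (w : EuclideanSpace ℝ (Fin d)) : ℝ :=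
  -(σ ^ 2)⁻¹ * (w j * gaussDensity d σ w)

noncomputable def gaussDensityPartialDeriv (d : ℕ) (σ : ℝ) (j : Fin d)
    (w : EuclideanSpace ℝ (Fin d)) : EuclideanSpace ℝ (Fin d) →L[ℝ] ℝ :=
  -(σ ^ 2)⁻¹ • (w j • gaussDensityDeriv d σ w + gaussDensity d σ w • EuclideanSpace.proj j)

noncomputable def gaussHessianKernel (d : ℕ) (σ : ℝ) (i j : Fin d)
    (w : EuclideanSpace ℝ (Fin d)) : ℝ :=
  (w i * w j - σ ^ 2 * (if i = j then 1 else 0)) / σ ^ 4 * gaussDensity d σ w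

lemma gaussDensity_nonneg (w : EuclideanSpace ℝ (Fin d)) : 0 ≤ gaussDensity d σ w := by
  unfold gaussDensity; positivity

lemma gaussDensity_neg (w : EuclideanSpace ℝ (Fin d)) :
    gaussDensity d σ (-w) = gaussDensity d σ w := by
  simp [gaussDensity]

@[fun_prop]
lemma continuous_gaussDensity : Continuous (gaussDensity d σ) := by
  unfold gaussDensity; fun_prop

@[fun_prop]
lemma continuous_gaussDensityDeriv : Continuous (gaussDensityDeriv d σ) := by
  unfold gaussDensityDeriv; fun_prop

lemma continuous_gaussDensityPartialDeriv (j : Fin d) :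
    Continuous (gaussDensityPartialDeriv d σ j) := by
  unfold gaussDensityPartialDeriv; fun_prop

lemma hasFDerivAt_gaussDensity (w : EuclideanSpace ℝ (Fin d)) :
    HasFDerivAt (gaussDensity d σ) (gaussDensityDeriv d σ w) w := by
  have hρ : gaussDensity d σ = fun w =>
      (2 * π * σ ^ 2) ^ (-(d : ℝ) / 2) * exp (-‖w‖ ^ 2 * (2 * σ ^ 2)⁻¹) := by
    funext w; rw [gaussDensity, ← div_eq_mul_inv]
  rw [hρ]
  refine ((((hasStrictFDerivAt_norm_sq w).hasFDerivAt.neg.mul_const _).exp).const_mul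
    _).congr_fderiv ?_
  ext v
  simp only [gaussDensityDeriv, hρ, Pi.neg_apply, mul_inv_rev, neg_mul, smul_neg,
    neg_apply, smul_apply, coe_innerSL_apply, nsmul_eq_mul,
    Nat.cast_ofNat, smul_eq_mul, neg_smul, neg_inj]
  ring

lemma hasFDerivAt_gaussDensityPartial (j : Fin d) (w : EuclideanSpace ℝ (Fin d)) :
    HasFDerivAt (gaussDensityPartial d σ j) (gaussDensityPartialDeriv d σ j w) w :=
  (((EuclideanSpace.proj j).hasFDerivAt).mul (hasFDerivAt_gaussDensity w)).const_mul _

lemma gaussDensityDeriv_apply_single (j : Fin d) (w : EuclideanSpace ℝ (Fin d)) :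
    gaussDensityDeriv d σ w (EuclideanSpace.single j 1) = gaussDensityPartial d σ j w := by
  simp [gaussDensityDeriv, gaussDensityPartial, EuclideanSpace.inner_single_right]
  ring

lemma gaussDensityPartialDeriv_apply_single (hσ : σ ≠ 0) (i j : Fin d)
    (w : EuclideanSpace ℝ (Fin d)) :
    gaussDensityPartialDeriv d σ j w (EuclideanSpace.single i 1) =
      gaussHessianKernel d σ i j w := by
  simp [gaussDensityPartialDeriv, gaussHessianKernel, gaussDensityDeriv,
    EuclideanSpace.inner_single_right, PiLp.single_apply, eq_comm (a := j)]
  split_ifs <;> field_simp <;> ring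

lemma hasGaussianDecay_gaussDensity (hσ : σ ≠ 0) : HasGaussianDecay (gaussDensity d σ) := by
  refine ⟨(2 * π * σ ^ 2) ^ (-(d : ℝ) / 2), (2 * σ ^ 2)⁻¹, by positivity, fun w => le_of_eq ?_⟩
  rw [norm_of_nonneg (gaussDensity_nonneg w), gaussDensity]
  ring_nf

lemma hasGaussianDecay_gaussDensityDeriv (hσ : σ ≠ 0) :
    HasGaussianDecay (gaussDensityDeriv d σ) :=
  (hasGaussianDecay_gaussDensity hσ).of_norm_le_pow_mul ‖-(σ ^ 2)⁻¹‖ 1 fun w => by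
    rw [gaussDensityDeriv, norm_smul, innerSL_apply_norm, norm_mul, pow_one, mul_right_comm]

lemma hasGaussianDecay_gaussDensityPartial (hσ : σ ≠ 0) (j : Fin d) :
    HasGaussianDecay (gaussDensityPartial d σ j) :=
  (hasGaussianDecay_gaussDensity hσ).of_norm_le_pow_mul ‖-(σ ^ 2)⁻¹‖ 1 fun w => by
    rw [gaussDensityPartial, norm_mul, norm_mul, pow_one, mul_assoc]
    gcongr
    exact PiLp.norm_apply_le w j

lemma hasGaussianDecay_gaussDensityPartialDeriv (hσ : σ ≠ 0) (j : Fin d) :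
    HasGaussianDecay (gaussDensityPartialDeriv d σ j) := by
  have h_first : HasGaussianDecay fun w : EuclideanSpace ℝ (Fin d) =>
      w j • gaussDensityDeriv d σ w :=
    (hasGaussianDecay_gaussDensityDeriv hσ).of_norm_le_pow_mul 1 1 fun w => by
      rw [norm_smul, one_mul, pow_one]
      gcongr
      exact PiLp.norm_apply_le w j
  have h_second : HasGaussianDecay fun w : EuclideanSpace ℝ (Fin d) =>
      gaussDensity d σ w • EuclideanSpace.proj (𝕜 := ℝ) j :=
    (hasGaussianDecay_gaussDensity hσ).of_norm_le_pow_mul ‖EuclideanSpace.proj j‖ 0 fun w => by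
      rw [norm_smul, pow_zero, mul_one, mul_comm]
  exact (h_first.add h_second).of_norm_le_pow_mul ‖-(σ ^ 2)⁻¹‖ 0 fun w => by
    rw [gaussDensityPartialDeriv, norm_smul, pow_zero, mul_one]
    rfl

lemma gaussHessianKernel_neg (i j : Fin d) (w : EuclideanSpace ℝ (Fin d)) :
    gaussHessianKernel d σ i j (-w) = gaussHessianKernel d σ i j w := by
  simp [gaussHessianKernel, gaussDensity_neg]

lemma integrable_gaussHessianKernel (hσ : σ ≠ 0) (i j : Fin d) :
    Integrable (gaussHessianKernel d σ i j) := by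
  refine HasGaussianDecay.integrable ?_ (by unfold gaussHessianKernel; fun_prop)
  refine (hasGaussianDecay_gaussDensityPartialDeriv hσ j).of_norm_le_pow_mul 1 0 fun w => ?_
  rw [← gaussDensityPartialDeriv_apply_single hσ, one_mul, pow_zero, one_mul]
  simpa using (gaussDensityPartialDeriv d σ j w).le_opNorm (EuclideanSpace.single i 1)

variable {u : EuclideanSpace ℝ (Fin d) → ℝ} {M : ℝ}

lemma fderiv_fderiv_integral_smul_gaussDensity_comp_sub (hσ : σ ≠ 0)
    (hu : AEStronglyMeasurable u) (hM : ∀ a, ‖u a‖ ≤ M) (x : EuclideanSpace ℝ (Fin d))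
    (i j : Fin d) :
    fderiv ℝ (fun y => fderiv ℝ (fun y' => ∫ a, u a • gaussDensity d σ (y' - a)) y
        (EuclideanSpace.single j 1)) x (EuclideanSpace.single i 1)
      = ∫ a, u a * gaussHessianKernel d σ i j (x - a) := by
  have h_first : (fun y => fderiv ℝ (fun y' => ∫ a, u a • gaussDensity d σ (y' - a)) y
      (EuclideanSpace.single j 1)) = fun y => ∫ a, u a • gaussDensityPartial d σ j (y - a) := by
    funext y
    simp_rw [fderiv_integral_smul_comp_sub_apply hasFDerivAt_gaussDensity
      continuous_gaussDensityDeriv (hasGaussianDecay_gaussDensity hσ)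
      (hasGaussianDecay_gaussDensityDeriv hσ) hu hM, gaussDensityDeriv_apply_single]
  simp_rw [h_first, fderiv_integral_smul_comp_sub_apply (hasFDerivAt_gaussDensityPartial j)
    (continuous_gaussDensityPartialDeriv j) (hasGaussianDecay_gaussDensityPartial hσ j)
    (hasGaussianDecay_gaussDensityPartialDeriv hσ j) hu hM,
    gaussDensityPartialDeriv_apply_single hσ, smul_eq_mul]

lemma integral_gaussHessianKernel (hσ : σ ≠ 0) (i j : Fin d) :
    ∫ w, gaussHessianKernel d σ i j w = 0 := by
  -- the Hessian formula for `u = 1`, whose smoothing is constant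
  have h := fderiv_fderiv_integral_smul_gaussDensity_comp_sub (u := 1) (M := 1) hσ
    aestronglyMeasurable_const (by simp) 0 i j
  have h_const : (fun y => ∫ a, gaussDensity d σ (y - a)) = fun _ => ∫ a, gaussDensity d σ a :=
    funext fun y => integral_sub_left_eq_self _ _ y
  simpa [h_const, gaussHessianKernel_neg, integral_neg_eq_self] using h.symm

lemma gaussSmooth_eq_integral_smul_gaussDensity_comp_sub (u : EuclideanSpace ℝ (Fin d) → ℝ) :
    gaussSmooth d σ u = fun y => ∫ a, u a • gaussDensity d σ (y - a) := by
  funext y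
  conv_rhs => rw [← integral_add_left_eq_self _ y]
  simp [gaussSmooth, gaussDensity_neg]

end Gaussian

theorem gaussSmooth_hessian_symmetric_general
    (d : ℕ) (σ : ℝ) (hσ : 0 < σ)
    (u : EuclideanSpace ℝ (Fin d) → ℝ)
    (hu_meas : Measurable u) (hu_bdd : ∃ M : ℝ, ∀ x, |u x| ≤ M) :
    ∀ (x : EuclideanSpace ℝ (Fin d)) (i j : Fin d),
      fderiv ℝ (fun y => fderiv ℝ (gaussSmooth d σ u) y (EuclideanSpace.single j 1)) x
          (EuclideanSpace.single i 1)
        = ∫ z, ((z i * z j - σ ^ 2 * (if i = j then 1 else 0)) / (2 * σ ^ 4))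
            * (u (x + z) + u (x - z) - 2 * u x) * gaussDensity d σ z := by
  intro x i j
  obtain ⟨M, hM⟩ := hu_bdd
  rw [gaussSmooth_eq_integral_smul_gaussDensity_comp_sub,
    fderiv_fderiv_integral_smul_gaussDensity_comp_sub hσ.ne' hu_meas.aestronglyMeasurable hM x i j,
    integral_mul_comp_sub_of_even_of_integral_eq_zero (integrable_gaussHessianKernel hσ.ne' i j)
      (gaussHessianKernel_neg i j) (integral_gaussHessianKernel hσ.ne' i j)
      hu_meas.aestronglyMeasurable hM x]
  congr 1 with z
  rw [gaussHessianKernel]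
  ring

/-- variance-reduced symmetric representation of the Hessian of the
Gaussian smoothing:
`Hf(x) = ∫ ((z zᵀ − σ² I)/(2σ⁴)) (u(x+z) + u(x−z) − 2u(x)) ρ_σ(z) dz`. -/
theorem gaussSmooth_hessian_symmetric
    (d : ℕ) (hd : 1 ≤ d) (σ : ℝ) (hσ : 0 < σ)
    (u : EuclideanSpace ℝ (Fin d) → ℝ)
    (hu_meas : Measurable u) (hu_bdd : ∃ M : ℝ, ∀ x, |u x| ≤ M) :
    ∀ (x : EuclideanSpace ℝ (Fin d)) (i j : Fin d),
      fderiv ℝ (fun y => fderiv ℝ (gaussSmooth d σ u) y (EuclideanSpace.single j 1)) x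
          (EuclideanSpace.single i 1)
        = ∫ z, ((z i * z j - σ ^ 2 * (if i = j then 1 else 0)) / (2 * σ ^ 4))
            * (u (x + z) + u (x - z) - 2 * u x) * gaussDensity d σ z :=
  gaussSmooth_hessian_symmetric_general d σ hσ u hu_meas hu_bdd
end

section
/- Let d ≥ 1, σ > 0, and let u : ℝ^d → ℝ be bounded and measurable with 𝔲 = sup_{x ∈ ℝ^d} |u(x)|. Then the Gaussian smoothing f of u is Lipschitz continuous with respect to the Euclidean norm with Lipschitz constant (𝔲/σ)√(2/π); that is, |f(x) − f(y)| ≤ (𝔲/σ)√(2/π) ‖x − y‖₂ for all x, y ∈ ℝ^d. -/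
open MeasureTheory Real

/-!
Writing `v = x - y`, the difference `f x - f y` is the integral of `u (y + ·)` against
`ρ (· - v) - ρ`, so it is at most `𝔲` times the `L¹` distance between the Gaussian density and
its translate by `v`. That distance only depends on `‖v‖` (a reflection carries `v` to
`‖v‖ e₀`), and along a coordinate axis the density factorises, so the distance is the
one-dimensional one. For an integrable profile `g` that decreases in `|t|`,
`∫ |g (t - a) - g t| = 2 ∫_{-a/2}^{a/2} g ≤ 2 a g 0`, and `2 g 0 = √(2/π) / σ` for the
`N(0, σ²)` density.
-/

open Set ProbabilityTheory
open scoped NNReal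

lemma setIntegral_Iic_comp_sub_right (g : ℝ → ℝ) (a c : ℝ) :
    ∫ t in Iic c, g (t - a) = ∫ t in Iic (c - a), g t := by
  have hpre : (fun t => t - a) ⁻¹' Iic (c - a) = Iic c := by
    ext t; simp
  rw [← hpre, (measurePreserving_sub_right volume a).setIntegral_preimage_emb
    (MeasurableEquiv.subRight a).measurableEmbedding]

lemma integral_abs_comp_sub_sub_eq {g : ℝ → ℝ} (hg : Integrable g)
    (hg_anti : ∀ s t, |s| ≤ |t| → g t ≤ g s) {a : ℝ} (ha : 0 ≤ a) :
    ∫ t, |g (t - a) - g t| = 2 * ∫ t in -(a / 2)..a / 2, g t := by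
  have hg_sub : Integrable (fun t => g (t - a)) := hg.comp_sub_right a
  -- `g (t - a) ≤ g t` exactly when `t` is closer to `0` than to `a`
  have h_left : EqOn (fun t => |g (t - a) - g t|) (fun t => g t - g (t - a)) (Iic (a / 2)) := by
    intro t (ht : t ≤ a / 2)
    have : g (t - a) ≤ g t :=
      hg_anti _ _ (sq_le_sq.1 (by nlinarith [mul_nonneg ha (by linarith : 0 ≤ a - 2 * t)]))
    simp only [abs_sub_comm (g (t - a)), abs_of_nonneg (sub_nonneg.2 this)]
  have h_right : EqOn (fun t => |g (t - a) - g t|) (fun t => g (t - a) - g t) (Ioi (a / 2)) := by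
    intro t (ht : a / 2 < t)
    have : g t ≤ g (t - a) :=
      hg_anti _ _ (sq_le_sq.1 (by nlinarith [mul_nonneg ha (by linarith : 0 ≤ 2 * t - a)]))
    simp only [abs_of_nonneg (sub_nonneg.2 this)]
  have h_shift : a / 2 - a = -(a / 2) := by ring
  have h_split : (∫ t in Iic (a / 2), |g (t - a) - g t|) + ∫ t in Ioi (a / 2), |g (t - a) - g t|
      = ∫ t, |g (t - a) - g t| :=
    intervalIntegral.integral_Iic_add_Ioi (hg_sub.sub hg).abs.integrableOn
      (hg_sub.sub hg).abs.integrableOn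
  rw [setIntegral_congr_fun measurableSet_Iic h_left,
    setIntegral_congr_fun measurableSet_Ioi h_right,
    integral_sub hg.integrableOn hg_sub.integrableOn,
    integral_sub hg_sub.integrableOn hg.integrableOn, setIntegral_Iic_comp_sub_right,
    h_shift] at h_split
  have h_total := intervalIntegral.integral_Iic_add_Ioi (b := a / 2) hg.integrableOn hg.integrableOn
  have h_total_sub : (∫ t in Iic (-(a / 2)), g t) + ∫ t in Ioi (a / 2), g (t - a) = ∫ t, g t := by
    rw [← h_shift, ← setIntegral_Iic_comp_sub_right, ← integral_sub_right_eq_self g a]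
    exact intervalIntegral.integral_Iic_add_Ioi hg_sub.integrableOn hg_sub.integrableOn
  have h_window := intervalIntegral.integral_Iic_sub_Iic (a := -(a / 2)) (b := a / 2)
    hg.integrableOn hg.integrableOn
  linarith

lemma integral_abs_comp_sub_sub_le {g : ℝ → ℝ} (hg : Integrable g)
    (hg_anti : ∀ s t, |s| ≤ |t| → g t ≤ g s) {a : ℝ} (ha : 0 ≤ a) :
    ∫ t, |g (t - a) - g t| ≤ 2 * a * g 0 := by
  calc ∫ t, |g (t - a) - g t| = 2 * ∫ t in -(a / 2)..a / 2, g t :=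
        integral_abs_comp_sub_sub_eq hg hg_anti ha
    _ ≤ 2 * ∫ _ in -(a / 2)..a / 2, g 0 := by
      gcongr
      exact intervalIntegral.integral_mono_on (by linarith) hg.intervalIntegrable
        intervalIntegrable_const fun t _ => hg_anti _ _ (by simp)
    _ = 2 * a * g 0 := by
      rw [intervalIntegral.integral_const, smul_eq_mul]
      ring

lemma integral_euclideanSpace_prod {ι : Type*} [Fintype ι] (f : ι → ℝ → ℝ) :
    ∫ x : EuclideanSpace ℝ ι, ∏ i, f i (x i) = ∏ i, ∫ t, f i t := by
  rw [← (PiLp.volume_preserving_toLp ι).integral_comp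
    (MeasurableEquiv.toLp 2 (ι → ℝ)).measurableEmbedding]
  exact integral_fintype_prod_volume_eq_prod f

lemma integrable_euclideanSpace_prod {ι : Type*} [Fintype ι] {f : ι → ℝ → ℝ}
    (hf : ∀ i, Integrable (f i)) :
    Integrable (fun x : EuclideanSpace ℝ ι => ∏ i, f i (x i)) := by
  rw [← (PiLp.volume_preserving_toLp ι).integrable_comp_emb
    (MeasurableEquiv.toLp 2 (ι → ℝ)).measurableEmbedding]
  exact Integrable.fintype_prod hf

lemma integral_abs_comp_sub_sub_eq_of_norm_eq {E : Type*} [NormedAddCommGroup E]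
    [InnerProductSpace ℝ E] [FiniteDimensional ℝ E] [MeasurableSpace E] [BorelSpace E]
    {ρ : E → ℝ} (hρ : ∀ x y, ‖x‖ = ‖y‖ → ρ x = ρ y) {v w : E} (h : ‖v‖ = ‖w‖) :
    ∫ z, |ρ (z - v) - ρ z| = ∫ z, |ρ (z - w) - ρ z| := by
  set R := Submodule.reflection (ℝ ∙ (v - w))ᗮ
  have hRv : R v = w := Submodule.reflection_sub h
  rw [← R.measurePreserving.integral_comp R.toHomeomorph.measurableEmbedding
    (fun z => |ρ (z - w) - ρ z|)]
  congr 1 with z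
  rw [show R z - w = R (z - v) by rw [map_sub, hRv], hρ _ _ (R.norm_map _),
    hρ (R z) z (R.norm_map _)]

lemma gaussDensity_sub_eq_prod (d : ℕ) (σ : ℝ) (m x : EuclideanSpace ℝ (Fin d)) :
    gaussDensity d σ (x - m) = ∏ i, gaussianPDFReal (m i) ⟨σ ^ 2, sq_nonneg σ⟩ (x i) := by
  have h_const : (2 * π * σ ^ 2) ^ (-(d : ℝ) / 2) = (√(2 * π * σ ^ 2))⁻¹ ^ d := by
    rw [sqrt_eq_rpow, ← rpow_neg (by positivity), ← rpow_mul_natCast (by positivity)]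
    ring_nf
  have h_exp : -‖x - m‖ ^ 2 / (2 * σ ^ 2) = ∑ i, -(x i - m i) ^ 2 / (2 * σ ^ 2) := by
    simp [EuclideanSpace.norm_sq_eq, ← Finset.sum_div]
  simp only [gaussDensity, gaussianPDFReal, h_const, h_exp, exp_sum,
    Finset.prod_mul_distrib, Finset.prod_const, Finset.card_univ, Fintype.card_fin]
  rfl

lemma integrable_gaussDensity (d : ℕ) (σ : ℝ) : Integrable (gaussDensity d σ) := by
  have h := integrable_euclideanSpace_prod (ι := Fin d)
    fun _ => integrable_gaussianPDFReal 0 ⟨σ ^ 2, sq_nonneg σ⟩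
  convert h using 2 with x
  simpa using gaussDensity_sub_eq_prod d σ 0 x

lemma gaussianPDFReal_zero_le_of_abs_le (v : ℝ≥0) {s t : ℝ} (h : |s| ≤ |t|) :
    gaussianPDFReal 0 v t ≤ gaussianPDFReal 0 v s := by
  simp only [gaussianPDFReal, sub_zero]
  gcongr _ * rexp (-?_ / _)
  exact sq_le_sq.2 h

lemma integral_abs_gaussianPDFReal_sub_le (v : ℝ≥0) {a : ℝ} (ha : 0 ≤ a) :
    ∫ t, |gaussianPDFReal a v t - gaussianPDFReal 0 v t| ≤ 2 * a * (√(2 * π * v))⁻¹ := by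
  simpa [gaussianPDFReal_sub, gaussianPDFReal] using
    integral_abs_comp_sub_sub_le (integrable_gaussianPDFReal 0 v)
      (fun _ _ => gaussianPDFReal_zero_le_of_abs_le v) ha

lemma integral_abs_gaussDensity_sub_single {d : ℕ} {σ : ℝ} (hσ : σ ≠ 0) (i₀ : Fin d) (a : ℝ) :
    ∫ z, |gaussDensity d σ (z - EuclideanSpace.single i₀ a) - gaussDensity d σ z|
      = ∫ t, |gaussianPDFReal a ⟨σ ^ 2, sq_nonneg σ⟩ t
          - gaussianPDFReal 0 ⟨σ ^ 2, sq_nonneg σ⟩ t| := by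
  set v : ℝ≥0 := ⟨σ ^ 2, sq_nonneg σ⟩
  have hv : v ≠ 0 := by rw [ne_eq, ← NNReal.coe_eq_zero]; exact pow_ne_zero 2 hσ
  have h_split (f : Fin d → ℝ) : ∏ i, f i = f i₀ * ∏ i ∈ Finset.univ.erase i₀, f i :=
    (Finset.mul_prod_erase _ _ (Finset.mem_univ i₀)).symm
  set h : Fin d → ℝ → ℝ := Function.update (fun _ => gaussianPDFReal 0 v) i₀
    fun t => |gaussianPDFReal a v t - gaussianPDFReal 0 v t|
  have h_pointwise (z : EuclideanSpace ℝ (Fin d)) :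
      |gaussDensity d σ (z - EuclideanSpace.single i₀ a) - gaussDensity d σ z|
        = ∏ i, h i (z i) := by
    set P := ∏ i ∈ Finset.univ.erase i₀, gaussianPDFReal 0 v (z i)
    have hP : 0 ≤ P := Finset.prod_nonneg fun _ _ => gaussianPDFReal_nonneg _ _ _
    have h_shift : gaussDensity d σ (z - EuclideanSpace.single i₀ a)
        = gaussianPDFReal a v (z i₀) * P := by
      rw [gaussDensity_sub_eq_prod, h_split]
      refine congr_arg₂ _ (by simp [v]) (Finset.prod_congr rfl fun i hi => ?_)
      simp [v, Finset.ne_of_mem_erase hi]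
    have h_center : gaussDensity d σ z = gaussianPDFReal 0 v (z i₀) * P := by
      rw [← sub_zero z, gaussDensity_sub_eq_prod, h_split]
      simp [P, v]
    rw [h_shift, h_center, h_split, ← sub_mul, abs_mul, abs_of_nonneg hP]
    refine congr_arg₂ _ (by simp [h]) (Finset.prod_congr rfl fun i hi => ?_)
    simp [h, Finset.ne_of_mem_erase hi]
  rw [integral_congr_ae (.of_forall h_pointwise), integral_euclideanSpace_prod, h_split,
    Finset.prod_eq_one fun i hi => ?_]
  · simp [h]
  · simpa [h, Finset.ne_of_mem_erase hi] using integral_gaussianPDFReal_eq_one 0 hv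

lemma integral_abs_gaussDensity_sub_le {d : ℕ} {σ : ℝ} (hσ : 0 < σ) (v : EuclideanSpace ℝ (Fin d)) :
    ∫ z, |gaussDensity d σ (z - v) - gaussDensity d σ z| ≤ √(2 / π) / σ * ‖v‖ := by
  rcases eq_or_ne v 0 with rfl | hv
  · simp
  obtain ⟨i₀⟩ : Nonempty (Fin d) := by
    by_contra h
    rw [not_nonempty_iff] at h
    exact hv (Subsingleton.elim _ _)
  have h_radial (x y : EuclideanSpace ℝ (Fin d)) (h : ‖x‖ = ‖y‖) :
      gaussDensity d σ x = gaussDensity d σ y := by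
    rw [gaussDensity, gaussDensity, h]
  have h_const : 2 * (√(2 * π * σ ^ 2))⁻¹ = √(2 / π) / σ := by
    rw [sqrt_mul (by positivity), sqrt_sq hσ.le, sqrt_div zero_le_two, sqrt_mul zero_le_two]
    field_simp
    rw [sq_sqrt zero_le_two]
  rw [integral_abs_comp_sub_sub_eq_of_norm_eq h_radial
      (w := EuclideanSpace.single i₀ ‖v‖) (by simp),
    integral_abs_gaussDensity_sub_single hσ.ne']
  calc _ ≤ 2 * ‖v‖ * (√(2 * π * σ ^ 2))⁻¹ :=
        integral_abs_gaussianPDFReal_sub_le _ (norm_nonneg v)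
    _ = √(2 / π) / σ * ‖v‖ := by rw [← h_const]; ring

lemma abs_integral_comp_add_mul_sub_le {G : Type*} [AddCommGroup G] [MeasurableSpace G]
    [MeasurableAdd G] {μ : Measure G} [μ.IsAddRightInvariant] {u ρ : G → ℝ}
    (hu : Measurable u) {B : ℝ} (hB : ∀ w, |u w| ≤ B) (hρ : Integrable ρ μ) (x y : G) :
    |∫ z, u (x + z) * ρ z ∂μ - ∫ z, u (y + z) * ρ z ∂μ|
      ≤ B * ∫ z, |ρ (z - (x - y)) - ρ z| ∂μ := by
  have hu_y : AEStronglyMeasurable (fun z => u (y + z)) μ :=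
    (hu.comp (measurable_const_add y)).aestronglyMeasurable
  have hρ_sub : Integrable (fun z => ρ (z - (x - y))) μ := hρ.comp_sub_right (x - y)
  have h_shift : ∫ z, u (x + z) * ρ z ∂μ = ∫ z, u (y + z) * ρ (z - (x - y)) ∂μ := by
    rw [← integral_add_right_eq_self _ (y - x)]
    congr 1 with z
    congr 2 <;> abel
  rw [h_shift, ← integral_sub (hρ_sub.bdd_mul hu_y (.of_forall fun z => hB (y + z)))
    (hρ.bdd_mul hu_y (.of_forall fun z => hB (y + z))), ← integral_const_mul]
  refine (abs_integral_le_integral_abs).trans (integral_mono_of_nonneg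
    (.of_forall fun _ => abs_nonneg _) ((hρ_sub.sub hρ).abs.const_mul B) (.of_forall fun z => ?_))
  dsimp only
  rw [← mul_sub, abs_mul]
  exact mul_le_mul_of_nonneg_right (hB _) (abs_nonneg _)

theorem gaussSmooth_lipschitz_general
    (d : ℕ) (σ : ℝ) (hσ : 0 < σ)
    (u : EuclideanSpace ℝ (Fin d) → ℝ)
    (hu_meas : Measurable u) (hu_bdd : ∃ M : ℝ, ∀ x, |u x| ≤ M) :
    ∀ x y : EuclideanSpace ℝ (Fin d),
      |gaussSmooth d σ u x - gaussSmooth d σ u y|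
        ≤ (⨆ w : EuclideanSpace ℝ (Fin d), |u w|) / σ * Real.sqrt (2 / Real.pi)
            * ‖x - y‖ := by
  intro x y
  obtain ⟨M, hM⟩ := hu_bdd
  have h_sup (w : EuclideanSpace ℝ (Fin d)) : |u w| ≤ ⨆ w, |u w| :=
    le_ciSup ⟨M, by rintro _ ⟨w, rfl⟩; exact hM w⟩ w
  calc |gaussSmooth d σ u x - gaussSmooth d σ u y|
      ≤ (⨆ w, |u w|) * ∫ z, |gaussDensity d σ (z - (x - y)) - gaussDensity d σ z| :=
        abs_integral_comp_add_mul_sub_le hu_meas h_sup (integrable_gaussDensity d σ) x y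
    _ ≤ (⨆ w, |u w|) * (√(2 / π) / σ * ‖x - y‖) :=
        mul_le_mul_of_nonneg_left (integral_abs_gaussDensity_sub_le hσ _)
          ((abs_nonneg _).trans (h_sup 0))
    _ = _ := by ring

/-- the Gaussian smoothing of a bounded measurable `u` is
`(𝔲/σ)√(2/π)`-Lipschitz for the Euclidean norm, where `𝔲 = sup |u|`. -/
theorem gaussSmooth_lipschitz
    (d : ℕ) (hd : 1 ≤ d) (σ : ℝ) (hσ : 0 < σ)
    (u : EuclideanSpace ℝ (Fin d) → ℝ)
    (hu_meas : Measurable u) (hu_bdd : ∃ M : ℝ, ∀ x, |u x| ≤ M) :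
    ∀ x y : EuclideanSpace ℝ (Fin d),
      |gaussSmooth d σ u x - gaussSmooth d σ u y|
        ≤ (⨆ w : EuclideanSpace ℝ (Fin d), |u w|) / σ * Real.sqrt (2 / Real.pi)
            * ‖x - y‖ :=
  gaussSmooth_lipschitz_general d σ hσ u hu_meas hu_bdd
end
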